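/- Let k be a field of characteristic p > 0 and q, b ∈ k*. Then there exists m ∈ ℕ with (m+1)_q · (q^m b - 1) = 0 if and only if q is a root of unity, or b = q^{-m} for some m ∈ ℕ. -/
import Mathlib


theorem stmt_7 {K : Type*} [Field K] (p : ℕ) [CharP K p] (hp : 0 < p)
    (q b : K) (hq : q ≠ 0) (hb : b ≠ 0) :
    (∃ m : ℕ, (∑ j ∈ Finset.range (m + 1), q ^ j) * (q ^ m * b - 1) = 0) ↔
    (∃ k : ℕ, 0 < k ∧ q ^ k = 1) ∨ (∃ m : ℕ, b = q⁻¹ ^ m) := by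
  constructor
  · rintro ⟨m, hm⟩
    rcases mul_eq_zero.mp hm with h | h
    · left
      by_cases hq1 : q = 1
      · exact ⟨1, one_pos, by simp [hq1]⟩
      · refine ⟨m + 1, Nat.succ_pos _, ?_⟩
        rw [geom_sum_eq hq1 (m + 1), div_eq_zero_iff] at h
        rcases h with h | h
        · exact sub_eq_zero.mp h
        · exact absurd (sub_eq_zero.mp h) hq1
    · right
      refine ⟨m, ?_⟩
      rw [inv_pow]
      exact eq_inv_of_mul_eq_one_right (sub_eq_zero.mp h)
  · rintro (⟨k, hk, hqk⟩ | ⟨m, hbm⟩)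
    · by_cases hq1 : q = 1
      · refine ⟨p - 1, ?_⟩
        apply mul_eq_zero.mpr
        left
        rw [hq1]
        simp only [one_pow, Finset.sum_const, Finset.card_range, nsmul_eq_mul, mul_one]
        rw [Nat.sub_add_cancel hp, CharP.cast_eq_zero]
      · refine ⟨k - 1, ?_⟩
        apply mul_eq_zero.mpr
        left
        rw [geom_sum_eq hq1, Nat.sub_add_cancel hk, hqk, sub_self, zero_div]
    · refine ⟨m, ?_⟩
      apply mul_eq_zero.mpr
      right
      rw [hbm, inv_pow, mul_inv_cancel₀ (pow_ne_zero m hq), sub_self]
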